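/- arXiv:2111.13758 — 2 statements merged into one kernel-verified Lean document; each statement's English description precedes it below -/
import Mathlib

section
/- Let α, β > 0 with α² ∉ ℚ and β ∉ ℚ. Then A_{α,β} is an open subset of (𝔈, τ). -/
noncomputable section

open scoped ENNReal

/-- The ambient Hilbert space `ℓ²` of real square-summable sequences. -/
abbrev ellTwo : Type := lp (fun _ : ℕ => ℝ) 2

/-- Erdős space `𝔈`: the additive subgroup of `ℓ²` consisting of the sequences
all of whose coordinates are rational. -/
def Erdos : AddSubgroup ellTwo where
  carrier := {x | ∀ k, ∃ q : ℚ, (x : ℕ → ℝ) k = (q : ℝ)}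
  add_mem' := by
    intro a b ha hb k
    obtain ⟨p, hp⟩ := ha k
    obtain ⟨q, hq⟩ := hb k
    exact ⟨p + q, by rw [lp.coeFn_add]; simp [hp, hq]⟩
  zero_mem' := fun k => ⟨0, by simp⟩
  neg_mem' := by
    intro a ha k
    obtain ⟨p, hp⟩ := ha k
    exact ⟨-p, by rw [lp.coeFn_neg]; simp [hp]⟩

/-- Erdős space as a type (with the subspace topology and norm inherited from `ℓ²`). -/
abbrev ErdosSpace : Type := ↥Erdos

/-- The coordinates of a point of Erdős space (indexed from `0`, so that the
coordinate `x_k` of the paper is `coords x (k-1)`). -/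
def coords (x : ErdosSpace) : ℕ → ℝ := ((x : ellTwo) : ℕ → ℝ)

/-- `mExists x α` says that `m_{x,α}` exists, i.e. some finite initial sum of squares
of coordinates exceeds `α` (here `m` counts how many initial coordinates are taken). -/
def mExists (x : ErdosSpace) (α : ℝ) : Prop :=
  ∃ m : ℕ, α < Real.sqrt (∑ k ∈ Finset.range m, (coords x k) ^ 2)

/-- `mIndex x α` is the least `m` such that `√(∑_{k<m} x_k²) > α` (and `0` if none exists);
this corresponds to `m_{x,α}` of the paper. -/
def mIndex (x : ErdosSpace) (α : ℝ) : ℕ :=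
  sInf {m : ℕ | α < Real.sqrt (∑ k ∈ Finset.range m, (coords x k) ^ 2)}

/-- The set `A_{α,β}`: those `x` for which either `m_{x,α}` exists and every coordinate
beyond the first `m_{x,α}` ones has absolute value `< β`, or `m_{x,α}` does not exist. -/
def A (α β : ℝ) : Set ErdosSpace :=
  {x | (mExists x α ∧ ∀ l, mIndex x α ≤ l → |coords x l| < β) ∨ ¬mExists x α}

/-!
The partial sums `∑_{k<m} x_k²` of a point of `𝔈` are rational while `α²` is not, so on `𝔈`
the conditions `α < √(∑_{k<m} x_k²)` and `α ≤ √(∑_{k<m} x_k²)` coincide. Hence `A_{α,β}` is the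
complement of `⋃ₗ {x : β ≤ |x_l|, α ≤ √(∑_{k<l} x_k²)}`. Each of these sets is closed, and the
family is locally finite because the coordinates of a point of `ℓ²` tend to `0`; so the union is
closed.
-/

namespace lp

variable {ι : Type*} {E : ι → Type*} [∀ i, NormedAddCommGroup (E i)] {p : ℝ≥0∞}

theorem finite_setOf_le_norm_apply (hp₀ : p ≠ 0) (hp : p ≠ ∞) (f : lp E p) {c : ℝ}
    (hc : 0 < c) : {i | c ≤ ‖f i‖}.Finite := by
  have hp' : 0 < p.toReal := ENNReal.toReal_pos hp₀ hp
  have hsmall : ∀ᶠ i in Filter.cofinite, ‖f i‖ ^ p.toReal < c ^ p.toReal :=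
    ((lp.memℓp f).summable hp').tendsto_cofinite_zero.eventually_lt_const (by positivity)
  refine (Filter.eventually_cofinite.mp hsmall).subset fun i hi => ?_
  exact not_lt.mpr (Real.rpow_le_rpow hc.le hi hp'.le)

variable [Fact (1 ≤ p)]

theorem locallyFinite_setOf_le_norm_apply (hp : p ≠ ∞) {c : ℝ} (hc : 0 < c) :
    LocallyFinite fun i => {f : lp E p | c ≤ ‖f i‖} := by
  intro f
  refine ⟨Metric.ball f (c / 2), Metric.ball_mem_nhds f (half_pos hc), ?_⟩
  have hp₀ : p ≠ 0 := (zero_lt_one.trans_le Fact.out).ne'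
  refine (finite_setOf_le_norm_apply hp₀ hp f (half_pos hc)).subset ?_
  rintro i ⟨g, hgi, hg⟩
  have hgf : ‖g i - f i‖ < c / 2 := by
    simpa using (norm_apply_le_norm hp₀ (g - f) i).trans_lt (mem_ball_iff_norm.mp hg)
  have hgi' : c ≤ ‖g i‖ := hgi
  show c / 2 ≤ ‖f i‖
  linarith [norm_le_norm_add_norm_sub' (g i) (f i)]

end lp

theorem continuous_coords (k : ℕ) : Continuous fun x : ErdosSpace => coords x k :=
  (lp.lipschitzWith_one_eval 2 k).continuous.comp continuous_subtype_val

theorem locallyFinite_setOf_le_abs_coords {β : ℝ} (hβ : 0 < β) :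
    LocallyFinite fun l => {x : ErdosSpace | β ≤ |coords x l|} :=
  (lp.locallyFinite_setOf_le_norm_apply (E := fun _ : ℕ => ℝ) (p := 2) ENNReal.ofNat_ne_top
    hβ).preimage_continuous continuous_subtype_val

def partialNorm (x : ErdosSpace) (m : ℕ) : ℝ :=
  √(∑ k ∈ Finset.range m, coords x k ^ 2)

theorem continuous_partialNorm (m : ℕ) : Continuous fun x : ErdosSpace => partialNorm x m :=
  (continuous_finsetSum _ fun k _ => (continuous_coords k).pow 2).sqrt

theorem monotone_partialNorm (x : ErdosSpace) : Monotone (partialNorm x) := fun _ _ hmn =>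
  Real.sqrt_le_sqrt <| Finset.sum_le_sum_of_subset_of_nonneg (Finset.range_mono hmn)
    fun _ _ _ => sq_nonneg _

theorem exists_rat_sum_sq_coords (x : ErdosSpace) (m : ℕ) :
    ∃ q : ℚ, ∑ k ∈ Finset.range m, coords x k ^ 2 = q := by
  choose r hr using x.2
  exact ⟨∑ k ∈ Finset.range m, r k ^ 2, by push_cast; simp only [coords, hr]⟩

theorem partialNorm_ne_of_irrational_sq {α : ℝ} (hα : Irrational (α ^ 2)) (x : ErdosSpace)
    (m : ℕ) : partialNorm x m ≠ α := by
  rintro rfl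
  obtain ⟨q, hq⟩ := exists_rat_sum_sq_coords x m
  exact hα ⟨q, by rw [partialNorm, Real.sq_sqrt (by positivity), hq]⟩

theorem mem_A_iff {α β : ℝ} {x : ErdosSpace} :
    x ∈ A α β ↔ ∀ l, β ≤ |coords x l| → partialNorm x l ≤ α := by
  constructor
  · rintro (⟨-, htail⟩ | hnex) l hl
    · by_contra! hlα
      exact (htail l (Nat.sInf_le hlα)).not_ge hl
    · exact not_lt.mp fun hlα => hnex ⟨l, hlα⟩
  · intro h
    by_cases hex : mExists x α
    · refine Or.inl ⟨hex, fun l hl => ?_⟩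
      by_contra! hβl
      have hα : α < partialNorm x (mIndex x α) := Nat.sInf_mem hex
      exact (hα.trans_le (monotone_partialNorm x hl)).not_ge (h l hβl)
    · exact Or.inr hex

theorem A_isOpen_general (α β : ℝ) (hβ : 0 < β)
    (hα2irr : Irrational (α ^ 2)) :
    IsOpen (A α β) := by
  have hA : A α β = (⋃ l, {x | β ≤ |coords x l|} ∩ {x | α ≤ partialNorm x l})ᶜ := by
    ext x
    simp only [mem_A_iff, Set.mem_compl_iff, Set.mem_iUnion, Set.mem_inter_iff,
      Set.mem_ofPred_eq, not_exists, not_and, not_le]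
    exact forall₂_congr fun l _ =>
      ⟨fun h => h.lt_of_ne (partialNorm_ne_of_irrational_sq hα2irr x l), le_of_lt⟩
  rw [hA]
  refine (LocallyFinite.isClosed_iUnion ?_ fun l => ?_).isOpen_compl
  · exact (locallyFinite_setOf_le_abs_coords hβ).subset fun _ => Set.inter_subset_left
  · exact (isClosed_le continuous_const (continuous_coords l).abs).inter
      (isClosed_le continuous_const (continuous_partialNorm l))

/-- Claim 3: for `α, β > 0` with `α²` and `β` irrational, `A_{α,β}` is open in Erdős space. -/
theorem A_isOpen (α β : ℝ) (hα : 0 < α) (hβ : 0 < β)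
    (hα2irr : Irrational (α ^ 2)) (hβirr : Irrational β) :
    IsOpen (A α β) :=
  A_isOpen_general α β hβ hα2irr
end
end

section
/- Let O = ⋂_{n∈ℕ⁺} A_{α_n,β_n}. If V is any open unbounded subset of (𝔈, τ) with 0 ∈ V, then V + V ⊄ O, i.e., there exist u, v ∈ V with u + v ∉ O. -/
/-! Choose a ball `B(0, ε) ⊆ V`, an index `n` with `|βₙ| < ε` and `u ∈ V` with `‖u‖ > αₙ`.
Then `m = m_{u,αₙ}` exists, and far beyond it some coordinate `u_l` is tiny. Adding the rational
point `v = q e_l` with `|βₙ| < q < ε` leaves the first `m` coordinates (hence `m_{u+v,αₙ}`)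
unchanged but makes `|(u + v)_l| > βₙ`, so `u + v ∉ A_{αₙ,βₙ}` although `v ∈ B(0, ε) ⊆ V`. -/

noncomputable section

open scoped ENNReal

open Filter Topology

lemma coords_add (x y : ErdosSpace) (k : ℕ) : coords (x + y) k = coords x k + coords y k := rfl

lemma hasSum_coords_sq (x : ErdosSpace) : HasSum (fun k => coords x k ^ 2) (‖x‖ ^ 2) := by
  have h := lp.hasSum_inner (𝕜 := ℝ) (x : ellTwo) (x : ellTwo)
  simp only [real_inner_self_eq_norm_sq, Real.norm_eq_abs, sq_abs] at h
  exact h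

lemma tendsto_sqrt_sum_coords_sq (x : ErdosSpace) :
    Tendsto (fun m => √(∑ k ∈ Finset.range m, coords x k ^ 2)) atTop (𝓝 ‖x‖) := by
  have h := (Real.continuous_sqrt.tendsto _).comp (hasSum_coords_sq x).tendsto_sum_nat
  rwa [Real.sqrt_sq (norm_nonneg _)] at h

lemma tendsto_coords_atTop_zero (x : ErdosSpace) : Tendsto (coords x) atTop (𝓝 0) := by
  have h := (Real.continuous_sqrt.tendsto 0).comp (hasSum_coords_sq x).summable.tendsto_atTop_zero
  simp only [Function.comp_def, Real.sqrt_sq_eq_abs, Real.sqrt_zero] at h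
  exact tendsto_zero_iff_abs_tendsto_zero _ |>.mpr h

def ErdosSpace.single (l : ℕ) (q : ℚ) : ErdosSpace :=
  ⟨lp.single (E := fun _ : ℕ => ℝ) 2 l (q : ℝ), fun k => ⟨(Pi.single l q : ℕ → ℚ) k, by
    by_cases hk : k = l
    · subst hk; simp
    · simp [hk]⟩⟩

lemma coords_single (l : ℕ) (q : ℚ) :
    coords (ErdosSpace.single l q) = Pi.single l (q : ℝ) :=
  lp.coeFn_single (E := fun _ : ℕ => ℝ) 2 l (q : ℝ)

lemma norm_single (l : ℕ) (q : ℚ) : ‖ErdosSpace.single l q‖ = |(q : ℝ)| :=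
  lp.norm_single (E := fun _ : ℕ => ℝ) (p := 2) (by norm_num) l (q : ℝ)

lemma mIndex_le {x : ErdosSpace} {α : ℝ} {m : ℕ}
    (hm : α < √(∑ k ∈ Finset.range m, coords x k ^ 2)) : mIndex x α ≤ m :=
  Nat.sInf_le hm

lemma notMem_A {x : ErdosSpace} {α β : ℝ} {m l : ℕ}
    (hm : α < √(∑ k ∈ Finset.range m, coords x k ^ 2)) (hml : m ≤ l) (hl : β ≤ |coords x l|) :
    x ∉ A α β := by
  rintro (⟨-, hsmall⟩ | hnone)
  · exact (hsmall l ((mIndex_le hm).trans hml)).not_ge hl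
  · exact hnone ⟨m, hm⟩

lemma exists_norm_lt_add_notMem_A {x : ErdosSpace} {α β ε : ℝ} (hx : α < ‖x‖) (hβ : |β| < ε) :
    ∃ y : ErdosSpace, ‖y‖ < ε ∧ x + y ∉ A α β := by
  obtain ⟨q, hβq, hqε⟩ := exists_rat_btwn hβ
  obtain ⟨m, hm⟩ := ((tendsto_sqrt_sum_coords_sq x).eventually (lt_mem_nhds hx)).exists
  have hgap : (0 : ℝ) < q - |β| := sub_pos.mpr hβq
  obtain ⟨l, hml, hl⟩ := ((eventually_ge_atTop m).and
    ((tendsto_coords_atTop_zero x).eventually (Metric.ball_mem_nhds 0 hgap))).exists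
  rw [Real.dist_0_eq_abs] at hl
  refine ⟨ErdosSpace.single l q, ?_, notMem_A (m := m) ?_ hml ?_⟩
  · rwa [norm_single, abs_of_pos ((abs_nonneg β).trans_lt hβq)]
  · have hprefix : ∀ k ∈ Finset.range m,
        coords (x + ErdosSpace.single l q) k ^ 2 = coords x k ^ 2 := by
      intro k hk
      have hkl : k ≠ l := by have := Finset.mem_range.mp hk; omega
      rw [coords_add, coords_single, Pi.single_eq_of_ne hkl, add_zero]
    rwa [Finset.sum_congr rfl hprefix]
  · rw [coords_add, coords_single, Pi.single_eq_same]
    calc β ≤ |β| := le_abs_self β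
      _ ≤ coords x l + q := by linarith [(abs_lt.mp hl).1]
      _ ≤ |coords x l + q| := le_abs_self _

theorem VplusV_not_subset_O_general (a b : ℕ → ℝ)
    (hbLim : Filter.Tendsto b Filter.atTop (nhds 0))
    (V : Set ErdosSpace) (hVopen : IsOpen V)
    (hVunb : ∀ M : ℝ, 0 < M → ∃ x ∈ V, M < ‖x‖) (h0V : (0 : ErdosSpace) ∈ V) :
    ∃ u ∈ V, ∃ v ∈ V, u + v ∉ ⋂ n, A (a n) (b n) := by
  obtain ⟨ε, hε, hball⟩ := Metric.isOpen_iff.mp hVopen 0 h0V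
  obtain ⟨n, hn⟩ := (hbLim.eventually (Metric.ball_mem_nhds 0 hε)).exists
  rw [Real.dist_0_eq_abs] at hn
  obtain ⟨u, huV, hu⟩ := hVunb (|a n| + 1) (by positivity)
  obtain ⟨v, hv, huv⟩ :=
    exists_norm_lt_add_notMem_A ((le_abs_self (a n)).trans_lt (by linarith) : a n < ‖u‖) hn
  exact ⟨u, huV, v, hball (by rwa [Metric.mem_ball, dist_zero_right]),
    fun hO => huv (Set.mem_iInter.mp hO n)⟩

/-- Claim 5: for `O = ⋂ₙ A_{αₙ,βₙ}`, if `V` is open, unbounded and contains `0`,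
then `V + V ⊄ O`. -/
theorem VplusV_not_subset_O (a b : ℕ → ℝ) (ha0 : ∀ n, 0 < a n) (haMono : StrictMono a)
    (haTop : Filter.Tendsto a Filter.atTop Filter.atTop)
    (haIrr : ∀ n, Irrational ((a n) ^ 2))
    (hb0 : ∀ n, 0 < b n) (hbAnti : StrictAnti b)
    (hbLim : Filter.Tendsto b Filter.atTop (nhds 0))
    (hbIrr : ∀ n, Irrational (b n))
    (V : Set ErdosSpace) (hVopen : IsOpen V)
    (hVunb : ∀ M : ℝ, 0 < M → ∃ x ∈ V, M < ‖x‖) (h0V : (0 : ErdosSpace) ∈ V) :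
    ∃ u ∈ V, ∃ v ∈ V, u + v ∉ ⋂ n, A (a n) (b n) :=
  VplusV_not_subset_O_general a b hbLim V hVopen hVunb h0V
end
end
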